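/- Let Q = ⟨X,A,S,τ⟩ ⊑ Q' = ⟨X',A',S',τ'⟩ be QBAFs for an explanandum e with X' = X ∪ {b} for some b ∉ X, such that every base score of Q' lies in the open interval (0,1) and every edge in (A'∪S')∖(A∪S) has b as an endpoint. Then under the DF-QuAD evaluation, for every c ∈ X such that there is exactly one path from b to c in Q', σ(Q',c) ≠ σ(Q,c). -/

import Mathlib

universe u v

variable {U : Type u} {Ag : Type v}

/-- A bipolar argumentation framework (BAF): arguments `X`, attacks `Att`, supports `Supp`. -/
structure BAF (U : Type u) where
  X : Finset U
  Att : Finset (U × U)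
  Supp : Finset (U × U)

namespace BAF

variable [DecidableEq U]

/-- The edges of a BAF: attacks together with supports. -/
def edges (B : BAF U) : Finset (U × U) := B.Att ∪ B.Supp

/-- A path from `a` to `b`: a nonempty list of consecutive edges `(c₀,c₁),…,(c_{n−1},cₙ)`
with `c₀ = a` and `cₙ = b`. -/
inductive IsPath (B : BAF U) : U → U → List (U × U) → Prop
  | single {a b : U} (h : (a, b) ∈ B.edges) : IsPath B a b [(a, b)]
  | cons {a c b : U} {p : List (U × U)} (h : (a, c) ∈ B.edges)
      (hp : IsPath B c b p) : IsPath B a b ((a, c) :: p)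

/-- `B ⊑ B'` for BAFs (componentwise inclusion). -/
def Sub (B B' : BAF U) : Prop := B.X ⊆ B'.X ∧ B.Att ⊆ B'.Att ∧ B.Supp ⊆ B'.Supp

/-- `B` is a BAF for the explanandum `e`. -/
structure IsFor (B : BAF U) (e : U) : Prop where
  e_mem : e ∈ B.X
  att_mem : ∀ p ∈ B.Att, p.1 ∈ B.X ∧ p.2 ∈ B.X
  supp_mem : ∀ p ∈ B.Supp, p.1 ∈ B.X ∧ p.2 ∈ B.X
  disj : ∀ p : U × U, ¬(p ∈ B.Att ∧ p ∈ B.Supp)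
  no_out : ∀ a : U, (e, a) ∉ B.edges
  reach : ∀ a ∈ B.X, a ≠ e → ∃ p, B.IsPath a e p
  acyclic : ∀ (a : U) (p : List (U × U)), ¬ B.IsPath a a p

/-- The number of attack edges occurring in a path. -/
def attCount (B : BAF U) (p : List (U × U)) : ℕ :=
  (p.filter (fun q => q ∈ B.Att)).length

/-- Pro arguments: arguments with a path to `e` containing an even number of attacks. -/
def pro (B : BAF U) (e : U) : Set U :=
  {a | a ∈ B.X ∧ ∃ p, B.IsPath a e p ∧ Even (B.attCount p)}

/-- Con arguments: arguments with a path to `e` containing an odd number of attacks. -/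
def con (B : BAF U) (e : U) : Set U :=
  {a | a ∈ B.X ∧ ∃ p, B.IsPath a e p ∧ Odd (B.attCount p)}

/-- The shortest path from `x` to `e` is strictly shorter than every path from `y` to `e`. -/
def SPlt (B : BAF U) (e x y : U) : Prop :=
  ∃ p, B.IsPath x e p ∧ ∀ q, B.IsPath y e q → p.length < q.length

end BAF

/-- A quantitative bipolar argumentation framework (QBAF), with base scores `bs`. -/
structure QBAF (U : Type u) where
  X : Finset U
  Att : Finset (U × U)
  Supp : Finset (U × U)
  bs : U → ℝ

namespace QBAF

variable [DecidableEq U]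

def toBAF (Q : QBAF U) : BAF U := ⟨Q.X, Q.Att, Q.Supp⟩

def edges (Q : QBAF U) : Finset (U × U) := Q.Att ∪ Q.Supp

/-- `Q` is a QBAF for `e`: its underlying BAF is for `e` and base scores lie in `[0,1]`. -/
def IsFor (Q : QBAF U) (e : U) : Prop :=
  Q.toBAF.IsFor e ∧ ∀ a ∈ Q.X, Q.bs a ∈ Set.Icc (0 : ℝ) 1

/-- `Q ⊑ Q'` for QBAFs. -/
def Sub (Q Q' : QBAF U) : Prop :=
  Q.X ⊆ Q'.X ∧ Q.Att ⊆ Q'.Att ∧ Q.Supp ⊆ Q'.Supp ∧ ∀ a ∈ Q.X, Q'.bs a = Q.bs a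

def attackers (Q : QBAF U) (a : U) : Finset U :=
  (Q.Att.filter (fun p => p.2 = a)).image Prod.fst

def supporters (Q : QBAF U) (a : U) : Finset U :=
  (Q.Supp.filter (fun p => p.2 = a)).image Prod.fst

end QBAF

/-- The DF-QuAD aggregation function on finite lists of values. -/
noncomputable def dfAgg : List ℝ → ℝ
  | [] => 0
  | v :: vs => v + dfAgg vs - v * dfAgg vs

/-- The DF-QuAD combination function. -/
noncomputable def dfComb (v0 vm vp : ℝ) : ℝ :=
  if vp ≤ vm then v0 - v0 * |vp - vm| else v0 + (1 - v0) * |vp - vm|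

/-- `f` is the DF-QuAD evaluation of the QBAF `Q`. -/
def IsDFQuADEval [DecidableEq U] (Q : QBAF U) (f : U → ℝ) : Prop :=
  ∀ a ∈ Q.X,
    f a = dfComb (Q.bs a) (dfAgg ((Q.attackers a).toList.map f))
        (dfAgg ((Q.supporters a).toList.map f))

/-- The stance determined by an evaluation value in `[0,1]`:
`−` (coded `-1`) on `[0,0.5)`, `0` on `{0.5}`, `+` (coded `1`) on `(0.5,1]`. -/
noncomputable def stanceVal (v : ℝ) : ℤ :=
  if v < 1 / 2 then -1 else if v = 1 / 2 then 0 else 1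

/-- An argumentative exchange (AX): exchange BAFs `B`, private QBAFs `Q`,
and a contributor mapping `contrib`. -/
structure AX (U : Type u) (Ag : Type v) where
  n : ℕ
  B : ℕ → BAF U
  Q : Ag → ℕ → QBAF U
  contrib : U × U → Ag × ℕ

namespace AX

variable [DecidableEq U]

/-- `E` is an AX for the explanandum `e` amongst the agents `Ag`. -/
structure IsAX (E : AX U Ag) (e : U) : Prop where
  n_pos : 0 < E.n
  agents : ∃ α β : Ag, α ≠ β
  B_for : ∀ t ≤ E.n, (E.B t).IsFor e
  B0_X : (E.B 0).X = {e}
  B0_Att : (E.B 0).Att = ∅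
  B0_Supp : (E.B 0).Supp = ∅
  B_mono : ∀ t < E.n, (E.B t).Sub (E.B (t + 1))
  Q_for : ∀ (α : Ag), ∀ t ≤ E.n, (E.Q α t).IsFor e
  Q_mono : ∀ (α : Ag), ∀ t < E.n, (E.Q α t).Sub (E.Q α (t + 1))
  Q_diff_X : ∀ (α : Ag), ∀ t < E.n,
    (E.Q α (t + 1)).X \ (E.Q α t).X ⊆ (E.B (t + 1)).X \ (E.B t).X
  Q_diff_Att : ∀ (α : Ag), ∀ t < E.n,
    (E.Q α (t + 1)).Att \ (E.Q α t).Att ⊆ (E.B (t + 1)).Att \ (E.B t).Att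
  Q_diff_Supp : ∀ (α : Ag), ∀ t < E.n,
    (E.Q α (t + 1)).Supp \ (E.Q α t).Supp ⊆ (E.B (t + 1)).Supp \ (E.B t).Supp
  learn_X : ∀ (α : Ag), ∀ t < E.n,
    (E.B (t + 1)).X \ (E.B t).X ⊆ (E.Q α (t + 1)).X
  learn_Att : ∀ (α : Ag), ∀ t < E.n,
    (E.B (t + 1)).Att \ (E.B t).Att ⊆ (E.Q α (t + 1)).Att
  learn_Supp : ∀ (α : Ag), ∀ t < E.n,
    (E.B (t + 1)).Supp \ (E.B t).Supp ⊆ (E.Q α (t + 1)).Supp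
  contrib_pos : ∀ p ∈ (E.B E.n).edges, 0 < (E.contrib p).2
  contrib_le : ∀ p ∈ (E.B E.n).edges, (E.contrib p).2 ≤ E.n
  contrib_mem : ∀ p ∈ (E.B E.n).edges, p ∈ (E.B (E.contrib p).2).edges
  contrib_new : ∀ p ∈ (E.B E.n).edges, p ∉ (E.B ((E.contrib p).2 - 1)).edges

/-- The set of edges contributed by agent `α` at timestep `t`. -/
def Cset [DecidableEq Ag] (E : AX U Ag) (α : Ag) (t : ℕ) : Finset (U × U) :=
  (E.B E.n).edges.filter (fun p => E.contrib p = (α, t))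

end AX

/-- All agents hold the same stance at timestep `t`. -/
def ResolvedAt (st : Ag → ℕ → ℤ) (t : ℕ) : Prop := ∀ α β : Ag, st α t = st β t

/-- The AX (with an initial conflict) is resolved. -/
def Resolved (E : AX U Ag) (st : Ag → ℕ → ℤ) : Prop :=
  ¬ ResolvedAt st 0 ∧ ResolvedAt st E.n ∧ ∀ t, 0 < t → t < E.n → ¬ ResolvedAt st t

/-- The AX (with an initial conflict) is unresolved. -/
def Unresolved (E : AX U Ag) (st : Ag → ℕ → ℤ) : Prop :=
  ¬ ResolvedAt st 0 ∧ ∀ t, 0 < t → t ≤ E.n → ¬ ResolvedAt st t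

/-- Agent `α` is arguing for `e` at `t`: some agent has a strictly smaller stance. -/
def ArguingFor (st : Ag → ℕ → ℤ) (α : Ag) (t : ℕ) : Prop := ∃ β, st β t < st α t

/-- Agent `α` is arguing against `e` at `t`: some agent has a strictly greater stance. -/
def ArguingAgainst (st : Ag → ℕ → ℤ) (α : Ag) (t : ℕ) : Prop := ∃ β, st α t < st β t

section Behaviours

variable [DecidableEq U]

/-- Condition (1) of the greedy behaviour: `(a,b)` is a pair of the private QBAF `Qp`
not yet in the exchange BAF `Bp`, in line with the agent's state (`forE`). -/
def GreedyEligible (Qp : QBAF U) (Bp : BAF U) (e : U) (forE : Bool) (a b : U) : Prop :=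
  (a, b) ∈ Qp.edges ∧ (a, b) ∉ Bp.edges ∧
    (if forE then
        ((a, b) ∈ Qp.Supp ∧ (b ∈ Bp.pro e ∨ b = e)) ∨ ((a, b) ∈ Qp.Att ∧ b ∈ Bp.con e)
      else
        ((a, b) ∈ Qp.Supp ∧ b ∈ Bp.con e) ∨ ((a, b) ∈ Qp.Att ∧ (b ∈ Bp.pro e ∨ b = e)))

/-- A greedy choice: eligible, of maximal strength (2), and closest to `e` among
equally strong eligible pairs (3). -/
def GreedyChoice (Qp : QBAF U) (Bp : BAF U) (σα : U → ℝ) (e : U) (forE : Bool)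
    (a b : U) : Prop :=
  GreedyEligible Qp Bp e forE a b ∧
    (∀ a' b' : U, GreedyEligible Qp Bp e forE a' b' → σα a' ≤ σα a) ∧
    (∀ a'' b'' : U, GreedyEligible Qp Bp e forE a'' b'' → σα a'' = σα a →
      ¬ BAF.SPlt Qp.toBAF e a'' a)

/-- A contribution set is a correct greedy contribution: empty or a single greedy choice. -/
def GreedyOK (Qp : QBAF U) (Bp : BAF U) (σα : U → ℝ) (e : U) (forE : Bool)
    (C : Finset (U × U)) : Prop :=
  C = ∅ ∨ ∃ a b : U, C = {(a, b)} ∧ GreedyChoice Qp Bp σα e forE a b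

/-- Agent `α` exhibits greedy behaviour throughout the AX `E`. -/
def GreedyBehaviour [DecidableEq Ag] (E : AX U Ag) (e : U)
    (ev : Ag → QBAF U → U → ℝ) (st : Ag → ℕ → ℤ) (α : Ag) : Prop :=
  ∀ t, 0 < t → t ≤ E.n →
    E.Cset α t = ∅ ∨
      ∃ a b : U, E.Cset α t = {(a, b)} ∧
        (ArguingFor st α (t - 1) →
          GreedyChoice (E.Q α (t - 1)) (E.B (t - 1)) (ev α (E.Q α (t - 1))) e true a b) ∧
        (ArguingAgainst st α (t - 1) →
          GreedyChoice (E.Q α (t - 1)) (E.B (t - 1)) (ev α (E.Q α (t - 1))) e false a b)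

/-- The inner condition of the shallow behaviour for a contribution set `C`. -/
def ShallowInner (Qp : QBAF U) (Bp : BAF U) (σα : U → ℝ) (e : U) (forE : Bool)
    (C : Finset (U × U)) (max : ℕ) : Prop :=
  C.card ≤ max ∧ (∀ p ∈ C, p.2 = e) ∧
    (if forE then
        C ⊆ Qp.Supp \ Bp.Supp ∧
          ∀ p ∈ C, ∀ b : U, (b, e) ∈ Qp.Supp → (b, e) ∉ Bp.Supp ∪ C → σα b ≤ σα p.1
      else
        C ⊆ Qp.Att \ Bp.Att ∧
          ∀ p ∈ C, ∀ b : U, (b, e) ∈ Qp.Att → (b, e) ∉ Bp.Att ∪ C → σα b ≤ σα p.1)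

/-- A contribution set is a correct shallow contribution: it satisfies the inner condition
and is of maximal cardinality doing so. -/
def ShallowOK (Qp : QBAF U) (Bp : BAF U) (σα : U → ℝ) (e : U) (forE : Bool)
    (C : Finset (U × U)) (max : ℕ) : Prop :=
  ShallowInner Qp Bp σα e forE C max ∧
    ∀ C' : Finset (U × U), ShallowInner Qp Bp σα e forE C' max → C'.card ≤ C.card

/-- A private view of the exchange BAF `Bp` by an agent with private QBAF `Qα`. -/
def PrivateView (Bp : BAF U) (Qα : QBAF U) (V : QBAF U) : Prop :=
  Bp.Sub V.toBAF ∧ V.Sub Qα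

/-- `ε` is the perceived effect on `e` of the pair `(a,b)` for an agent with private QBAF
`Qp` given the exchange BAF `Bp` (under the DF-QuAD evaluation). -/
def PerceivedEffect (Qp : QBAF U) (Bp : BAF U) (e a b : U) (ε : ℝ) : Prop :=
  ∃ (V V' : QBAF U) (f f' : U → ℝ),
    PrivateView Bp Qp V ∧
    V'.X = insert a V.X ∧
    V'.Att = (V'.X ×ˢ V'.X) ∩ Qp.Att ∧
    V'.Supp = (V'.X ×ˢ V'.X) ∩ Qp.Supp ∧
    (∀ x ∈ V'.X, V'.bs x = Qp.bs x) ∧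
    IsDFQuADEval V f ∧ IsDFQuADEval V' f' ∧
    ε = f' e - f e

/-- A pair eligible for the counterfactual behaviour. -/
def CFEligible (Qp : QBAF U) (Bp : BAF U) (a b : U) : Prop :=
  (a, b) ∈ Qp.edges ∧ (a, b) ∉ Bp.edges ∧ a ∈ Qp.X ∧ a ∉ Bp.X ∧ b ∈ Bp.X

/-- Agent `α` exhibits counterfactual behaviour throughout the AX `E`,
where `εf α t a b` is the perceived effect of `(a,b)` at timestep `t`. -/
def CFBehaviour [DecidableEq Ag] (E : AX U Ag) (st : Ag → ℕ → ℤ)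
    (εf : Ag → ℕ → U → U → ℝ) (α : Ag) : Prop :=
  ∀ t, 0 < t → t ≤ E.n →
    E.Cset α t = ∅ ∨
      ∃ a b : U, E.Cset α t = {(a, b)} ∧
        CFEligible (E.Q α (t - 1)) (E.B (t - 1)) a b ∧
        (ArguingFor st α (t - 1) →
          0 < εf α t a b ∧
            ∀ a' b' : U, CFEligible (E.Q α (t - 1)) (E.B (t - 1)) a' b' →
              εf α t a' b' ≤ εf α t a b) ∧
        (ArguingAgainst st α (t - 1) →
          εf α t a b < 0 ∧
            ∀ a' b' : U, CFEligible (E.Q α (t - 1)) (E.B (t - 1)) a' b' →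
              εf α t a b ≤ εf α t a' b')

end Behaviours

/-!
Under DF-QuAD with base scores in `(0,1)` every strength lies in `(0,1)`; the aggregation
`1 - ∏ (1 - vᵢ)` then changes whenever exactly one of its arguments changes (adding a positive
argument counts as a change), and the combination is strictly monotone in `v⁺ - v⁻`.
Arguments not reachable from the new argument `b` keep their strength, by induction along the
acyclic edge relation. If `c` is reached from `b` by a unique path, ending with the edge `(x, c)`,
then every other in-neighbour of `c` is unreachable from `b`, while `x` is `b` itself or, by
induction, has a changed strength; so exactly one argument of exactly one aggregation at `c`
changes, and so does the strength of `c`.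
-/

variable {U : Type u}

theorem dfAgg_eq_one_sub_prod (l : List ℝ) : dfAgg l = 1 - (l.map (1 - ·)).prod := by
  induction l with
  | nil => simp [dfAgg]
  | cons v vs ih => simp only [dfAgg, ih, List.map_cons, List.prod_cons]; ring

theorem dfAgg_map_toList (s : Finset U) (g : U → ℝ) :
    dfAgg (s.toList.map g) = 1 - ∏ a ∈ s, (1 - g a) := by
  rw [dfAgg_eq_one_sub_prod, List.map_map, ← Finset.prod_map_toList]
  rfl

theorem dfAgg_map_toList_mem_Ico {s : Finset U} {g : U → ℝ}
    (hg : ∀ a ∈ s, g a ∈ Set.Ioo 0 1) : dfAgg (s.toList.map g) ∈ Set.Ico 0 1 := by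
  rw [dfAgg_map_toList]
  have hpos : 0 < ∏ a ∈ s, (1 - g a) :=
    Finset.prod_pos fun a ha => by linarith [(hg a ha).2]
  have hle : ∏ a ∈ s, (1 - g a) ≤ 1 :=
    Finset.prod_le_one (fun a ha => by linarith [(hg a ha).2]) fun a ha => by
      linarith [(hg a ha).1]
  constructor <;> linarith

variable [DecidableEq U]

theorem dfAgg_map_toList_ne_iff {s s' : Finset U} {g g' : U → ℝ} {x : U} (hs : s ⊆ s')
    (hmem : ∀ a ∈ s', a ≠ x → a ∈ s) (hval : ∀ a ∈ s', a ≠ x → g' a = g a)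
    (hlt : ∀ a ∈ s, g a < 1) (hpos : 0 < g' x) (hchg : x ∈ s → g' x ≠ g x) :
    dfAgg (s'.toList.map g') ≠ dfAgg (s.toList.map g) ↔ x ∈ s' := by
  rw [dfAgg_map_toList, dfAgg_map_toList, Ne, sub_right_inj]
  by_cases hx : x ∈ s'
  · simp only [hx, iff_true]
    have hrest : ∏ a ∈ s'.erase x, (1 - g' a) = ∏ a ∈ s'.erase x, (1 - g a) :=
      Finset.prod_congr rfl fun a ha => by
        rw [hval a (Finset.mem_of_mem_erase ha) (Finset.ne_of_mem_erase ha)]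
    have hP : 0 < ∏ a ∈ s'.erase x, (1 - g a) := Finset.prod_pos fun a ha => by
      linarith [hlt a (hmem a (Finset.mem_of_mem_erase ha) (Finset.ne_of_mem_erase ha))]
    rw [← Finset.mul_prod_erase s' _ hx, hrest]
    by_cases hxs : x ∈ s
    · have hsx : s.erase x = s'.erase x := by
        ext a
        simp only [Finset.mem_erase]
        exact ⟨fun ⟨hax, ha⟩ => ⟨hax, hs ha⟩,
          fun ⟨hax, ha⟩ => ⟨hax, hmem a ha hax⟩⟩
      rw [← Finset.mul_prod_erase s _ hxs, hsx]
      intro h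
      exact hchg hxs (by linarith [mul_right_cancel₀ hP.ne' h])
    · have hsx : s = s'.erase x := by
        ext a
        simp only [Finset.mem_erase]
        exact ⟨fun ha => ⟨ne_of_mem_of_not_mem ha hxs, hs ha⟩,
          fun ⟨hax, ha⟩ => hmem a ha hax⟩
      rw [hsx]
      intro h
      nlinarith
  · simp only [hx, iff_false, not_not]
    obtain rfl : s' = s :=
      Finset.Subset.antisymm (fun a ha => hmem a ha (ne_of_mem_of_not_mem ha hx)) hs
    exact Finset.prod_congr rfl fun a ha => by rw [hval a ha (ne_of_mem_of_not_mem ha hx)]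

theorem dfComb_lt_dfComb {v₀ vm vp wm wp : ℝ} (h₀ : 0 < v₀) (h₁ : v₀ < 1)
    (h : vp - vm < wp - wm) : dfComb v₀ vm vp < dfComb v₀ wm wp := by
  unfold dfComb
  split_ifs with hv hw hw
  · rw [abs_of_nonpos (by linarith), abs_of_nonpos (by linarith)]; nlinarith
  · rw [abs_of_nonpos (by linarith), abs_of_pos (by linarith)]; nlinarith
  · linarith
  · rw [abs_of_pos (by linarith), abs_of_pos (by linarith)]; nlinarith

theorem dfComb_ne {v₀ vm vp wm wp : ℝ} (h₀ : v₀ ∈ Set.Ioo 0 1) (h : vp - vm ≠ wp - wm) :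
    dfComb v₀ vm vp ≠ dfComb v₀ wm wp := by
  rcases h.lt_or_gt with h | h
  · exact (dfComb_lt_dfComb h₀.1 h₀.2 h).ne
  · exact (dfComb_lt_dfComb h₀.1 h₀.2 h).ne'

theorem dfComb_mem_Ioo {v₀ vm vp : ℝ} (h₀ : v₀ ∈ Set.Ioo 0 1) (hm : vm ∈ Set.Ico 0 1)
    (hp : vp ∈ Set.Ico 0 1) : dfComb v₀ vm vp ∈ Set.Ioo 0 1 := by
  obtain ⟨h₀, h₁⟩ := h₀
  obtain ⟨hm₀, hm₁⟩ := hm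
  obtain ⟨hp₀, hp₁⟩ := hp
  unfold dfComb
  split_ifs with hv
  · rw [abs_of_nonpos (by linarith)]; constructor <;> nlinarith
  · rw [abs_of_pos (by linarith)]; constructor <;> nlinarith

namespace BAF

variable {B : BAF U}

theorem IsPath.append_edge {a c d : U} {p : List (U × U)} (h : B.IsPath a c p)
    (hd : (c, d) ∈ B.edges) : B.IsPath a d (p ++ [(c, d)]) := by
  induction h with
  | single h => exact .cons h (.single hd)
  | cons h _ ih => exact .cons h (ih hd)

theorem IsPath.exists_eq_append {a c : U} {p : List (U × U)} (h : B.IsPath a c p) :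
    ∃ q x, p = q ++ [(x, c)] ∧ (x, c) ∈ B.edges ∧
      (q = [] ∧ x = a ∨ B.IsPath a x q) := by
  induction h with
  | single h => exact ⟨[], _, rfl, h, .inl ⟨rfl, rfl⟩⟩
  | @cons a m _ _ h _ ih =>
    obtain ⟨q, x, rfl, hx, hq⟩ := ih
    rcases hq with ⟨rfl, rfl⟩ | hq
    · exact ⟨[(a, x)], x, rfl, hx, .inr (.single h)⟩
    · exact ⟨(a, m) :: q, x, rfl, hx, .inr (.cons h hq)⟩

theorem eq_of_forall_isPath_eq_append {a b c x : U} {q : List (U × U)}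
    (hu : ∀ r, B.IsPath b c r → r = q ++ [(x, c)]) (hac : (a, c) ∈ B.edges)
    (ha : a = b ∨ ∃ r, B.IsPath b a r) : a = x := by
  obtain ⟨r, hr⟩ : ∃ r, B.IsPath b c (r ++ [(a, c)]) := by
    rcases ha with rfl | ⟨r, hr⟩
    · exact ⟨[], .single hac⟩
    · exact ⟨r, hr.append_edge hac⟩
  have := (List.append_inj' (hu _ hr) rfl).2
  simp_all

/-- Measure: the number of ancestors, finite and strictly increasing along every edge by
acyclicity. -/
theorem wellFounded_edges (hacy : ∀ a p, ¬ B.IsPath a a p) :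
    WellFounded fun a c => (a, c) ∈ B.edges := by
  classical
  let anc (x : U) : Finset U := (B.edges.image Prod.fst).filter fun y => ∃ p, B.IsPath y x p
  refine Subrelation.wf (fun {a c} hac => ?_) (measure fun x => (anc x).card).wf
  show (anc a).card < (anc c).card
  refine Finset.card_lt_card ((Finset.ssubset_iff_of_subset ?_).2 ⟨a, ?_, ?_⟩)
  · intro y hy
    simp only [anc, Finset.mem_filter] at hy ⊢
    obtain ⟨hy, p, hp⟩ := hy
    exact ⟨hy, _, hp.append_edge hac⟩
  · simp only [anc, Finset.mem_filter, Finset.mem_image]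
    exact ⟨⟨_, hac, rfl⟩, _, .single hac⟩
  · simp only [anc, Finset.mem_filter]
    exact fun ⟨_, p, hp⟩ => hacy a p hp

theorem IsFor.mem_of_mem_edges {e a c : U} (hB : B.IsFor e) (h : (a, c) ∈ B.edges) :
    a ∈ B.X ∧ c ∈ B.X := by
  rcases Finset.mem_union.1 h with h | h
  · exact hB.att_mem _ h
  · exact hB.supp_mem _ h

end BAF

namespace QBAF

variable {Q Q' : QBAF U} {a b c e : U}

theorem mem_attackers : a ∈ Q.attackers c ↔ (a, c) ∈ Q.Att := by
  simp [attackers]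

theorem mem_supporters : a ∈ Q.supporters c ↔ (a, c) ∈ Q.Supp := by
  simp [supporters]

structure IsExtensionBy (Q Q' : QBAF U) (b : U) : Prop where
  sub : Q.Sub Q'
  not_mem : b ∉ Q.X
  new_edge : ∀ p ∈ Q'.edges, p ∉ Q.edges → p.1 = b ∨ p.2 = b

namespace IsExtensionBy

theorem edges_subset (h : Q.IsExtensionBy Q' b) : Q.edges ⊆ Q'.edges :=
  Finset.union_subset_union h.sub.2.1 h.sub.2.2.1

theorem mem_edges_of_ne (h : Q.IsExtensionBy Q' b) (hac : (a, c) ∈ Q'.edges) (ha : a ≠ b)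
    (hc : c ≠ b) : (a, c) ∈ Q.edges := by
  by_contra hn
  rcases h.new_edge _ hac hn with h' | h' <;> contradiction

theorem mem_attackers_iff (h : Q.IsExtensionBy Q' b) (hQ' : Q'.toBAF.IsFor e) (ha : a ≠ b)
    (hc : c ≠ b) : a ∈ Q'.attackers c ↔ a ∈ Q.attackers c := by
  simp only [mem_attackers]
  refine ⟨fun hA => ?_, fun hA => h.sub.2.1 hA⟩
  rcases Finset.mem_union.1 (h.mem_edges_of_ne (Finset.mem_union_left _ hA) ha hc) with hA' | hS
  · exact hA'
  · exact absurd ⟨hA, h.sub.2.2.1 hS⟩ (hQ'.disj _)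

theorem mem_supporters_iff (h : Q.IsExtensionBy Q' b) (hQ' : Q'.toBAF.IsFor e) (ha : a ≠ b)
    (hc : c ≠ b) : a ∈ Q'.supporters c ↔ a ∈ Q.supporters c := by
  simp only [mem_supporters]
  refine ⟨fun hS => ?_, fun hS => h.sub.2.2.1 hS⟩
  rcases Finset.mem_union.1 (h.mem_edges_of_ne (Finset.mem_union_right _ hS) ha hc) with hA | hS'
  · exact absurd ⟨h.sub.2.1 hA, hS⟩ (hQ'.disj _)
  · exact hS'

theorem attackers_eq (h : Q.IsExtensionBy Q' b) (hQ' : Q'.toBAF.IsFor e) (hc : c ≠ b)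
    (hbc : (b, c) ∉ Q'.Att) : Q'.attackers c = Q.attackers c := by
  ext a
  refine ⟨fun ha => (h.mem_attackers_iff hQ' ?_ hc).1 ha, fun ha => ?_⟩
  · rintro rfl
    exact hbc (mem_attackers.1 ha)
  · exact mem_attackers.2 (h.sub.2.1 (mem_attackers.1 ha))

theorem supporters_eq (h : Q.IsExtensionBy Q' b) (hQ' : Q'.toBAF.IsFor e) (hc : c ≠ b)
    (hbc : (b, c) ∉ Q'.Supp) : Q'.supporters c = Q.supporters c := by
  ext a
  refine ⟨fun ha => (h.mem_supporters_iff hQ' ?_ hc).1 ha, fun ha => ?_⟩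
  · rintro rfl
    exact hbc (mem_supporters.1 ha)
  · exact mem_supporters.2 (h.sub.2.2.1 (mem_supporters.1 ha))

variable {f f' : U → ℝ}

theorem eval_eq_of_forall_not_isPath (h : Q.IsExtensionBy Q' b) (hQ : Q.toBAF.IsFor e)
    (hQ' : Q'.toBAF.IsFor e) (hf : IsDFQuADEval Q f) (hf' : IsDFQuADEval Q' f') :
    ∀ x ∈ Q.X, (∀ p, ¬ Q'.toBAF.IsPath b x p) → f' x = f x := by
  intro x
  induction x using (BAF.wellFounded_edges hQ'.acyclic).induction with
  | _ x ih =>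
  intro hx hnr
  have hxb : x ≠ b := fun hxb => h.not_mem (hxb ▸ hx)
  have hin : ∀ a, (a, x) ∈ Q.edges → f' a = f a := fun a hax =>
    ih a (h.edges_subset hax) (hQ.mem_of_mem_edges hax).1
      fun p hp => hnr _ (hp.append_edge (h.edges_subset hax))
  rw [hf' x (h.sub.1 hx), hf x hx, h.sub.2.2.2 x hx,
    h.attackers_eq hQ' hxb fun hbx => hnr _ (.single (Finset.mem_union_left _ hbx)),
    h.supporters_eq hQ' hxb fun hbx => hnr _ (.single (Finset.mem_union_right _ hbx))]
  congr 2 <;> refine List.map_congr_left fun a ha => hin a ?_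
  · exact Finset.mem_union_left _ (mem_attackers.1 (Finset.mem_toList.1 ha))
  · exact Finset.mem_union_right _ (mem_supporters.1 (Finset.mem_toList.1 ha))

theorem dfAgg_attackers_ne_iff (h : Q.IsExtensionBy Q' b) (hQ : Q.toBAF.IsFor e)
    (hQ' : Q'.toBAF.IsFor e) (hfQ : ∀ x ∈ Q.X, f x ∈ Set.Ioo 0 1) {x : U} (hcb : c ≠ b)
    (hlast : ∀ a, (a, c) ∈ Q'.edges → a ≠ x → a ≠ b ∧ f' a = f a) (hxpos : 0 < f' x)
    (hchg : (x, c) ∈ Q.edges → f' x ≠ f x) :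
    dfAgg ((Q'.attackers c).toList.map f') ≠ dfAgg ((Q.attackers c).toList.map f) ↔
      (x, c) ∈ Q'.Att := by
  have hin {a : U} (ha : (a, c) ∈ Q'.Att) : (a, c) ∈ Q'.edges := Finset.mem_union_left _ ha
  refine (dfAgg_map_toList_ne_iff (fun a ha => ?_) (fun a ha hax => ?_)
    (fun a ha hax => (hlast a (hin (mem_attackers.1 ha)) hax).2) (fun a ha => ?_) hxpos
    (fun hxs => hchg (Finset.mem_union_left _ (mem_attackers.1 hxs)))).trans mem_attackers
  · exact mem_attackers.2 (h.sub.2.1 (mem_attackers.1 ha))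
  · exact (h.mem_attackers_iff hQ' (hlast a (hin (mem_attackers.1 ha)) hax).1 hcb).1 ha
  · exact (hfQ a (hQ.mem_of_mem_edges (Finset.mem_union_left _ (mem_attackers.1 ha))).1).2

theorem dfAgg_supporters_ne_iff (h : Q.IsExtensionBy Q' b) (hQ : Q.toBAF.IsFor e)
    (hQ' : Q'.toBAF.IsFor e) (hfQ : ∀ x ∈ Q.X, f x ∈ Set.Ioo 0 1) {x : U} (hcb : c ≠ b)
    (hlast : ∀ a, (a, c) ∈ Q'.edges → a ≠ x → a ≠ b ∧ f' a = f a) (hxpos : 0 < f' x)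
    (hchg : (x, c) ∈ Q.edges → f' x ≠ f x) :
    dfAgg ((Q'.supporters c).toList.map f') ≠ dfAgg ((Q.supporters c).toList.map f) ↔
      (x, c) ∈ Q'.Supp := by
  have hin {a : U} (ha : (a, c) ∈ Q'.Supp) : (a, c) ∈ Q'.edges := Finset.mem_union_right _ ha
  refine (dfAgg_map_toList_ne_iff (fun a ha => ?_) (fun a ha hax => ?_)
    (fun a ha hax => (hlast a (hin (mem_supporters.1 ha)) hax).2) (fun a ha => ?_) hxpos
    (fun hxs => hchg (Finset.mem_union_right _ (mem_supporters.1 hxs)))).trans mem_supporters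
  · exact mem_supporters.2 (h.sub.2.2.1 (mem_supporters.1 ha))
  · exact (h.mem_supporters_iff hQ' (hlast a (hin (mem_supporters.1 ha)) hax).1 hcb).1 ha
  · exact (hfQ a (hQ.mem_of_mem_edges (Finset.mem_union_right _ (mem_supporters.1 ha))).1).2

theorem eval_ne_of_existsUnique_isPath (h : Q.IsExtensionBy Q' b) (hQ : Q.toBAF.IsFor e)
    (hQ' : Q'.toBAF.IsFor e) (hbs : ∀ x ∈ Q.X, Q.bs x ∈ Set.Ioo 0 1)
    (hfQ : ∀ x ∈ Q.X, f x ∈ Set.Ioo 0 1) (hfQ' : ∀ x ∈ Q'.X, f' x ∈ Set.Ioo 0 1)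
    (hf : IsDFQuADEval Q f) (hf' : IsDFQuADEval Q' f') :
    ∀ c ∈ Q.X, (∃! p, Q'.toBAF.IsPath b c p) → f' c ≠ f c := by
  intro c
  induction c using (BAF.wellFounded_edges hQ'.acyclic).induction with
  | _ c ih =>
  rintro hc ⟨_, hp, hu⟩
  obtain ⟨q, x, rfl, hxc, hq⟩ := hp.exists_eq_append
  have hcb : c ≠ b := fun hcb => h.not_mem (hcb ▸ hc)
  have hlast : ∀ a, (a, c) ∈ Q'.edges → a ≠ x → a ≠ b ∧ f' a = f a := by
    intro a hac hax
    have hab : a ≠ b := fun hab => hax (BAF.eq_of_forall_isPath_eq_append hu hac (.inl hab))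
    refine ⟨hab, h.eval_eq_of_forall_not_isPath hQ hQ' hf hf' a
      (hQ.mem_of_mem_edges (h.mem_edges_of_ne hac hab hcb)).1 fun r hr => hax ?_⟩
    exact BAF.eq_of_forall_isPath_eq_append hu hac (.inr ⟨r, hr⟩)
  have hchg : (x, c) ∈ Q.edges → f' x ≠ f x := by
    intro hxcQ
    have hxQ := (hQ.mem_of_mem_edges hxcQ).1
    have hqx : Q'.toBAF.IsPath b x q :=
      hq.resolve_left fun ⟨_, hxb⟩ => h.not_mem (hxb ▸ hxQ)
    exact ih x hxc hxQ
      ⟨q, hqx, fun r hr => List.append_cancel_right (hu _ (hr.append_edge hxc))⟩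
  have hxpos : 0 < f' x := (hfQ' x (hQ'.mem_of_mem_edges hxc).1).1
  have hatt := h.dfAgg_attackers_ne_iff hQ hQ' hfQ hcb hlast hxpos hchg
  have hsupp := h.dfAgg_supporters_ne_iff hQ hQ' hfQ hcb hlast hxpos hchg
  rw [hf' c (h.sub.1 hc), hf c hc, h.sub.2.2.2 c hc]
  refine dfComb_ne (hbs c hc) fun heq => ?_
  rcases Finset.mem_union.1 hxc with hA | hS
  · have hS : (x, c) ∉ Q'.Supp := fun hS => hQ'.disj _ ⟨hA, hS⟩
    exact hatt.2 hA (by linarith [not_not.1 (mt hsupp.1 hS)])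
  · have hA : (x, c) ∉ Q'.Att := fun hA => hQ'.disj _ ⟨hA, hS⟩
    exact hsupp.2 hS (by linarith [not_not.1 (mt hatt.1 hA)])

end IsExtensionBy

end QBAF

theorem IsDFQuADEval.mem_Ioo {Q : QBAF U} {e : U} {f : U → ℝ} (hQ : Q.toBAF.IsFor e)
    (hbs : ∀ x ∈ Q.X, Q.bs x ∈ Set.Ioo 0 1) (hf : IsDFQuADEval Q f) :
    ∀ x ∈ Q.X, f x ∈ Set.Ioo 0 1 := by
  intro x
  induction x using (BAF.wellFounded_edges hQ.acyclic).induction with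
  | _ x ih =>
  intro hx
  have hin : ∀ a, (a, x) ∈ Q.edges → f a ∈ Set.Ioo 0 1 := fun a hax =>
    ih a hax (hQ.mem_of_mem_edges hax).1
  rw [hf x hx]
  exact dfComb_mem_Ioo (hbs x hx)
    (dfAgg_map_toList_mem_Ico fun a ha =>
      hin a (Finset.mem_union_left _ (QBAF.mem_attackers.1 ha)))
    (dfAgg_map_toList_mem_Ico fun a ha =>
      hin a (Finset.mem_union_right _ (QBAF.mem_supporters.1 ha)))

theorem statement14_general {U : Type u} [DecidableEq U] (e : U) (Q Q' : QBAF U)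
    (hQ : Q.IsFor e) (hQ' : Q'.IsFor e) (hsub : Q.Sub Q')
    (b : U) (hb : b ∉ Q.X)
    (hbs : ∀ x ∈ Q'.X, 0 < Q'.bs x ∧ Q'.bs x < 1)
    (hedge : ∀ p ∈ Q'.edges, p ∉ Q.edges → p.1 = b ∨ p.2 = b)
    (f f' : U → ℝ) (hf : IsDFQuADEval Q f) (hf' : IsDFQuADEval Q' f') :
    ∀ c ∈ Q.X, (∃! p, Q'.toBAF.IsPath b c p) → f' c ≠ f c := by
  have hext : Q.IsExtensionBy Q' b := ⟨hsub, hb, hedge⟩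
  have hbsQ : ∀ x ∈ Q.X, Q.bs x ∈ Set.Ioo 0 1 := fun x hx =>
    hsub.2.2.2 x hx ▸ hbs x (hsub.1 hx)
  exact hext.eval_ne_of_existsUnique_isPath hQ.1 hQ'.1 hbsQ (hf.mem_Ioo hQ.1 hbsQ)
    (hf'.mem_Ioo hQ'.1 hbs) hf hf'

/-- an added argument with all base scores in (0,1) changes the DF-QuAD
evaluation of every argument reachable from it by exactly one path. -/
theorem statement14 {U : Type u} [DecidableEq U] (e : U) (Q Q' : QBAF U)
    (hQ : Q.IsFor e) (hQ' : Q'.IsFor e) (hsub : Q.Sub Q')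
    (b : U) (hb : b ∉ Q.X) (hX : Q'.X = insert b Q.X)
    (hbs : ∀ x ∈ Q'.X, 0 < Q'.bs x ∧ Q'.bs x < 1)
    (hedge : ∀ p ∈ Q'.edges, p ∉ Q.edges → p.1 = b ∨ p.2 = b)
    (f f' : U → ℝ) (hf : IsDFQuADEval Q f) (hf' : IsDFQuADEval Q' f') :
    ∀ c ∈ Q.X, (∃! p, Q'.toBAF.IsPath b c p) → f' c ≠ f c :=
  statement14_general e Q Q' hQ hQ' hsub b hb hbs hedge f f' hf hf'
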